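/- In any Nash stable matching profile for a population state (θ, τ, ε) where θ is the parochial efficient type (U_θ(x,y,t) = (π(x,y)+π(y,x))·1[t=θ]), the matching is positive assortative: μ_{θ,θ}(ε) = 1 and μ_{τ,τ}(ε) = 1, and type-θ agents play an efficient strategy pair among themselves. Consequently, the average material payoff of type θ is (1/2)·S̄ where S̄ is the maximal total payoff, and this is at least the average material payoff of type τ. -/
import Mathlib


noncomputable section
namespace Evo

open Finset

def IsMixed {X : Type*} [Fintype X] (x : X → ℝ) : Prop :=
  (∀ a, 0 ≤ x a) ∧ ∑ a, x a = 1

def payoff {X : Type*} [Fintype X] (p : X → X → ℝ) (x y : X → ℝ) : ℝ :=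
  ∑ a, ∑ b, x a * y b * p a b

def totalPay {X : Type*} [Fintype X] (p : X → X → ℝ) (x y : X → ℝ) : ℝ :=
  payoff p x y + payoff p y x

def purePt {X : Type*} [DecidableEq X] (a : X) : X → ℝ := fun b => if b = a then 1 else 0

def NashEq {X : Type*} [Fintype X] (p : X → X → ℝ) (x y : X → ℝ) : Prop :=
  IsMixed x ∧ IsMixed y ∧
    (∀ x', IsMixed x' → payoff p x' y ≤ payoff p x y) ∧
    (∀ y', IsMixed y' → payoff p y' x ≤ payoff p y x)

def Efficient {X : Type*} [Fintype X] (p : X → X → ℝ) (x y : X → ℝ) : Prop :=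
  IsMixed x ∧ IsMixed y ∧
    ∀ x' y', IsMixed x' → IsMixed y' → totalPay p x' y' ≤ totalPay p x y

def LoserBest {X : Type*} [Fintype X] (p : X → X → ℝ) (x y : X → ℝ) : Prop :=
  NashEq p x y ∧ ∀ x' y', NashEq p x' y' →
    min (payoff p x' y') (payoff p y' x') ≤ min (payoff p x y) (payoff p y x)

/-- The two preference types present in a population state. -/
inductive Ty : Type
  | θ | τ
deriving DecidableEq

/-- A matching profile (μ(ε), Σ) for a population state with fraction 1−ε of
type θ and ε of type τ, under complete information.  `μ a b` is the proportion
of type-a agents matched with type-b agents, and `σ a b` is the (pairwise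
homogeneous) strategy pair played in such a match, where `(σ a b).1` is the
type-a agent's strategy. -/
structure MatchProfile (X : Type*) [Fintype X] where
  ε : ℝ
  μ : Ty → Ty → ℝ
  σ : Ty → Ty → ((X → ℝ) × (X → ℝ))
  hε0 : 0 < ε
  hε1 : ε < 1
  hμ0 : ∀ a b, 0 ≤ μ a b
  hμθ : μ .θ .θ + μ .θ .τ = 1
  hμτ : μ .τ .τ + μ .τ .θ = 1
  hbal : (1 - ε) * μ .θ .τ = ε * μ .τ .θ
  hσ1 : ∀ a b, IsMixed (σ a b).1
  hσ2 : ∀ a b, IsMixed (σ a b).2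
  hσsym1 : ∀ a b, (σ a b).1 = (σ b a).2
  hσsym2 : ∀ a b, (σ a b).2 = (σ b a).1

variable {X : Type*} [Fintype X]

/-- Internal stability: every matched pair plays a Nash equilibrium of the
subjective utility game between them.  `U a x y t` is the utility of a type-a
agent playing x against a type-t opponent playing y. -/
def InternallyStable (U : Ty → (X → ℝ) → (X → ℝ) → Ty → ℝ) (M : MatchProfile X) : Prop :=
  ∀ a b : Ty, 0 < M.μ a b →
    (∀ x', IsMixed x' → U a x' (M.σ a b).2 b ≤ U a (M.σ a b).1 (M.σ a b).2 b) ∧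
    (∀ y', IsMixed y' → U b y' (M.σ a b).1 a ≤ U b (M.σ a b).2 (M.σ a b).1 a)

/-- A blocking pair (Definition 1): positive-mass agents of types a and b
(currently matched to types c and d) agree on a Nash-equilibrium strategy pair
(x̂,ŷ) that makes both strictly better off. -/
def BlockingPair (U : Ty → (X → ℝ) → (X → ℝ) → Ty → ℝ) (M : MatchProfile X) : Prop :=
  ∃ (a b c d : Ty) (xh yh : X → ℝ),
    IsMixed xh ∧ IsMixed yh ∧
    0 < M.μ a c ∧ 0 < M.μ b d ∧
    (∀ x', IsMixed x' → U a x' yh b ≤ U a xh yh b) ∧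
    (∀ y', IsMixed y' → U b y' xh a ≤ U b yh xh a) ∧
    U a (M.σ a c).1 (M.σ a c).2 c < U a xh yh b ∧
    U b (M.σ b d).1 (M.σ b d).2 d < U b yh xh a

/-- Nash stability (Definition 2): internal and external stability. -/
def NashStable (U : Ty → (X → ℝ) → (X → ℝ) → Ty → ℝ) (M : MatchProfile X) : Prop :=
  InternallyStable U M ∧ ¬ BlockingPair U M

/-- Average material payoff of type `a` (with `b` the other type), splitting
same-type asymmetric play equally. -/
def avgPay (p : X → X → ℝ) (M : MatchProfile X) (a b : Ty) : ℝ :=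
  M.μ a a * ((payoff p (M.σ a a).1 (M.σ a a).2 + payoff p (M.σ a a).2 (M.σ a a).1) / 2)
    + M.μ a b * payoff p (M.σ a b).1 (M.σ a b).2

lemma totalPay_comm (p : X → X → ℝ) (x y : X → ℝ) : totalPay p x y = totalPay p y x := by
  simp [totalPay, add_comm]

lemma payoff_pos (p : X → X → ℝ) (hp : ∀ s t : X, 0 < p s t) {x y : X → ℝ}
    (hx : IsMixed x) (hy : IsMixed y) : 0 < payoff p x y := by
  obtain ⟨a, ha⟩ : ∃ a, 0 < x a := by
    by_contra h; push_neg at h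
    have h0 : ∀ a, x a = 0 := fun a => le_antisymm (h a) (hx.1 a)
    have := hx.2; simp [h0] at this
  obtain ⟨b, hb⟩ : ∃ b, 0 < y b := by
    by_contra h; push_neg at h
    have h0 : ∀ b, y b = 0 := fun b => le_antisymm (h b) (hy.1 b)
    have := hy.2; simp [h0] at this
  refine Finset.sum_pos' (fun i _ => Finset.sum_nonneg fun j _ =>
      mul_nonneg (mul_nonneg (hx.1 i) (hy.1 j)) (hp i j).le) ?_
  exact ⟨a, Finset.mem_univ a, Finset.sum_pos'
    (fun j _ => mul_nonneg (mul_nonneg (hx.1 a) (hy.1 j)) (hp a j).le)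
    ⟨b, Finset.mem_univ b, mul_pos (mul_pos ha hb) (hp a b)⟩⟩

lemma totalPay_pos (p : X → X → ℝ) (hp : ∀ s t : X, 0 < p s t) {x y : X → ℝ}
    (hx : IsMixed x) (hy : IsMixed y) : 0 < totalPay p x y :=
  add_pos (payoff_pos p hp hx hy) (payoff_pos p hp hy hx)

/-- if θ is the parochial efficient type, any Nash stable matching
profile is positive assortative (μ_{θθ}=μ_{ττ}=1), type-θ agents play an
efficient strategy pair among themselves, so type θ's average material payoff is
half the maximal total payoff, which is at least type τ's average payoff. -/
theorem parochial_efficient_stable_matching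
    (p : X → X → ℝ) (hp : ∀ s t : X, 0 < p s t)
    (U : Ty → (X → ℝ) → (X → ℝ) → Ty → ℝ)
    (hUθ : ∀ x y t, U .θ x y t = (payoff p x y + payoff p y x) * (if t = Ty.θ then 1 else 0))
    (xt yt : X → ℝ) (heff : Efficient p xt yt)
    (M : MatchProfile X) (hstable : NashStable U M) :
    M.μ .θ .θ = 1 ∧ M.μ .τ .τ = 1 ∧
    Efficient p (M.σ .θ .θ).1 (M.σ .θ .θ).2 ∧
    avgPay p M .θ .τ = totalPay p xt yt / 2 ∧
    avgPay p M .τ .θ ≤ avgPay p M .θ .τ := by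
  obtain ⟨hxt, hyt, hmax⟩ := heff
  have hpos : 0 < totalPay p xt yt := totalPay_pos p hp hxt hyt
  -- Step 1: μ θ τ = 0
  have hθτ : M.μ .θ .τ = 0 := by
    by_contra h
    have hμpos : 0 < M.μ .θ .τ := lt_of_le_of_ne (M.hμ0 .θ .τ) (Ne.symm h)
    apply hstable.2
    refine ⟨.θ, .θ, .τ, .τ, xt, yt, hxt, hyt, hμpos, hμpos, ?_, ?_, ?_, ?_⟩
    · intro x' hx'
      simp only [hUθ, eq_self_iff_true, if_true, mul_one]
      exact hmax x' yt hx' hyt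
    · intro y' hy'
      simp only [hUθ, eq_self_iff_true, if_true, mul_one]
      calc payoff p y' xt + payoff p xt y' = totalPay p xt y' := by
            simp [totalPay, add_comm]
        _ ≤ totalPay p xt yt := hmax xt y' hxt hy'
        _ = payoff p yt xt + payoff p xt yt := by simp [totalPay, add_comm]
    · simp only [hUθ]; norm_num
      exact hpos
    · simp only [hUθ]; norm_num
      calc (0:ℝ) < totalPay p xt yt := hpos
        _ = payoff p yt xt + payoff p xt yt := by simp [totalPay, add_comm]
  have hθθ : M.μ .θ .θ = 1 := by have := M.hμθ; linarith
  have hτθ : M.μ .τ .θ = 0 := by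
    have hb := M.hbal
    rw [hθτ, mul_zero] at hb
    have := M.hε0
    nlinarith
  have hττ : M.μ .τ .τ = 1 := by have := M.hμτ; linarith
  -- Step 2: totalPay xt yt ≤ totalPay (σ θ θ)
  have hge : totalPay p xt yt ≤ totalPay p (M.σ .θ .θ).1 (M.σ .θ .θ).2 := by
    by_contra h
    push_neg at h
    apply hstable.2
    have hμθθ : (0:ℝ) < M.μ .θ .θ := by rw [hθθ]; norm_num
    refine ⟨.θ, .θ, .θ, .θ, xt, yt, hxt, hyt, hμθθ, hμθθ, ?_, ?_, ?_, ?_⟩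
    · intro x' hx'
      simp only [hUθ, eq_self_iff_true, if_true, mul_one]
      exact hmax x' yt hx' hyt
    · intro y' hy'
      simp only [hUθ, eq_self_iff_true, if_true, mul_one]
      calc payoff p y' xt + payoff p xt y' = totalPay p xt y' := by
            simp [totalPay, add_comm]
        _ ≤ totalPay p xt yt := hmax xt y' hxt hy'
        _ = payoff p yt xt + payoff p xt yt := by simp [totalPay, add_comm]
    · simp only [hUθ, eq_self_iff_true, if_true, mul_one]
      exact h
    · simp only [hUθ, eq_self_iff_true, if_true, mul_one]
      calc payoff p (M.σ .θ .θ).1 (M.σ .θ .θ).2 + payoff p (M.σ .θ .θ).2 (M.σ .θ .θ).1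
          = totalPay p (M.σ .θ .θ).1 (M.σ .θ .θ).2 := rfl
        _ < totalPay p xt yt := h
        _ = payoff p yt xt + payoff p xt yt := by simp [totalPay, add_comm]
  have heq : totalPay p (M.σ .θ .θ).1 (M.σ .θ .θ).2 = totalPay p xt yt :=
    le_antisymm (hmax _ _ (M.hσ1 .θ .θ) (M.hσ2 .θ .θ)) hge
  refine ⟨hθθ, hττ, ⟨M.hσ1 .θ .θ, M.hσ2 .θ .θ, fun x' y' hx' hy' => ?_⟩, ?_, ?_⟩
  · rw [heq]; exact hmax x' y' hx' hy'
  · rw [avgPay, hθθ, hθτ]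
    have : payoff p (M.σ .θ .θ).1 (M.σ .θ .θ).2 + payoff p (M.σ .θ .θ).2 (M.σ .θ .θ).1
        = totalPay p xt yt := heq
    rw [this]; ring
  · rw [avgPay, avgPay, hθθ, hθτ, hττ, hτθ]
    have h1 : payoff p (M.σ .τ .τ).1 (M.σ .τ .τ).2 + payoff p (M.σ .τ .τ).2 (M.σ .τ .τ).1
        = totalPay p (M.σ .τ .τ).1 (M.σ .τ .τ).2 := rfl
    have h2 : totalPay p (M.σ .τ .τ).1 (M.σ .τ .τ).2
        ≤ totalPay p (M.σ .θ .θ).1 (M.σ .θ .θ).2 := by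
      rw [heq]; exact hmax _ _ (M.hσ1 .τ .τ) (M.hσ2 .τ .τ)
    have h3 : payoff p (M.σ .θ .θ).1 (M.σ .θ .θ).2 + payoff p (M.σ .θ .θ).2 (M.σ .θ .θ).1
        = totalPay p (M.σ .θ .θ).1 (M.σ .θ .θ).2 := rfl
    rw [h1, h3]
    linarith

end Evo
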